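/- Let F be a spread of a hyperplane S of PG(4,q), and let r₁,...,r_k (k ≤ q−1) be distinct lines of F. Suppose F_k is obtained from F by successively, for i = 1,...,k, removing r_i and adding q+1 pairwise skew lines not contained in S covering r_i and disjoint from all lines currently in the partial spread other than r_i. Then at each step i ≤ q−1 such a set of q+1 lines exists, provided the number of previously added lines is at most q^2−1 minus q at each point-covering step; in particular since (i−1)(q+1) + q ≤ (q−2)(q+1)+q < q^2 the construction always succeeds for k ≤ q−1. -/

import Mathlib

open Submodule Module
open scoped LinearAlgebra.Projectivization

/-!
All `k (q + 1) ≤ q² - 1` points `X` of the lines `r i` are treated at once. Fix `w ∉ S`; for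
`u ∈ S` the line `⟨X, w + u⟩` leaves `S` and meets it only in `X`, and the lines `⟨X, w + u⟩`,
`⟨X', w + u'⟩` through distinct points are skew as soon as `u' - u ∉ ⟨X, X'⟩`. The vectors `u`
are chosen greedily: each must avoid at most `q² - 2` cosets of planes, `q²` vectors each, and
these cannot cover the `q⁴` vectors of `S`. Since the new lines meet `S` only in points of the
`r i`, they are skew to the remaining lines of the spread.
-/

/-- A partial spread of PG(4,q): a set of pairwise disjoint (skew) lines. -/
def IsPartialSpread (F : Type) [Field F] (L : Set (Submodule F (Fin 5 → F))) : Prop :=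
  (∀ ℓ ∈ L, Module.finrank F ℓ = 2) ∧
  ∀ ℓ₁ ∈ L, ∀ ℓ₂ ∈ L, ℓ₁ ≠ ℓ₂ → ℓ₁ ⊓ ℓ₂ = ⊥

lemma inf_eq_bot_of_le_of_inf_le {α : Type*} [Lattice α] [OrderBot α] {a b c s : α}
    (ha : a ≤ s) (hb : b ⊓ s ≤ c) (hac : a ⊓ c = ⊥) : a ⊓ b = ⊥ :=
  eq_bot_iff.mpr <| hac ▸
    le_inf inf_le_left ((le_inf inf_le_right (inf_le_left.trans ha)).trans hb)

lemma injective_of_pairwise_inf_eq_bot {α ι : Type*} [SemilatticeInf α] [OrderBot α]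
    {f : ι → α} (hf : ∀ i, f i ≠ ⊥) (h : Pairwise fun i j => f i ⊓ f j = ⊥) :
    Function.Injective f :=
  fun i j hij => by_contra fun hne => hf j (by simpa [hij] using h hne)

section Avoidance

variable {G ι : Type*} [AddGroup G] [Finite G]

lemma exists_mem_forall_sub_notMem (S : Set G) (T : Finset ι) (u : ι → G)
    (W : ι → AddSubgroup G) (hcard : ∑ t ∈ T, Nat.card (W t) < S.ncard) :
    ∃ x ∈ S, ∀ t ∈ T, x - u t ∉ W t := by
  classical
  have := Fintype.ofFinite G
  by_contra! hcover
  have hsub : S.toFinset ⊆ T.biUnion fun t => (W t : Set G).toFinset.image (· + u t) := by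
    intro x hx
    obtain ⟨t, ht, hxt⟩ := hcover x (Set.mem_toFinset.mp hx)
    exact Finset.mem_biUnion.mpr
      ⟨t, ht, Finset.mem_image.mpr ⟨x - u t, by simpa using hxt, sub_add_cancel x (u t)⟩⟩
  have := calc S.ncard = S.toFinset.card := Set.ncard_eq_toFinset_card' S
    _ ≤ _ := Finset.card_le_card hsub
    _ ≤ ∑ t ∈ T, ((W t : Set G).toFinset.image (· + u t)).card := Finset.card_biUnion_le
    _ ≤ ∑ t ∈ T, Nat.card (W t) := Finset.sum_le_sum fun t _ => by
      rw [Finset.card_image_of_injective _ (add_left_injective (u t)), Set.toFinset_card,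
        Nat.card_eq_fintype_card]
      rfl
  omega

lemma exists_pairwise_sub_notMem [Finite ι] (S : Set G)
    (W : ι → ι → AddSubgroup G)
    (hW : ∀ t t', W t t' = W t' t) {N : ℕ} (hN : ∀ t t', Nat.card (W t t') ≤ N)
    (hι : (Nat.card ι - 1) * N < S.ncard) :
    ∃ u : ι → G, (∀ t, u t ∈ S) ∧ ∀ t t', t ≠ t' → u t' - u t ∉ W t t' := by
  classical
  have := Fintype.ofFinite ι
  suffices h : ∀ s : Finset ι, ∃ u : ι → G, (∀ t ∈ s, u t ∈ S) ∧
      ∀ t ∈ s, ∀ t' ∈ s, t ≠ t' → u t' - u t ∉ W t t' by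
    obtain ⟨u, huS, hu⟩ := h Finset.univ
    exact ⟨u, fun t => huS t (Finset.mem_univ t),
      fun t t' => hu t (Finset.mem_univ t) t' (Finset.mem_univ t')⟩
  intro s
  induction s using Finset.induction_on with
  | empty => exact ⟨0, by simp, by simp⟩
  | @insert a s ha ih =>
    obtain ⟨u, huS, hu⟩ := ih
    have hs : s.card ≤ Nat.card ι - 1 := by
      have := Finset.card_le_univ (insert a s)
      rw [Finset.card_insert_of_notMem ha, Fintype.card_eq_nat_card] at this
      omega
    obtain ⟨x, hxS, hx⟩ := exists_mem_forall_sub_notMem S s u (W a) <| calc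
      ∑ t ∈ s, Nat.card (W a t) ≤ s.card * N :=
        Finset.sum_le_card_nsmul _ _ _ fun t _ => hN a t
      _ ≤ (Nat.card ι - 1) * N := Nat.mul_le_mul_right N hs
      _ < S.ncard := hι
    have hne : ∀ t ∈ s, t ≠ a := fun t ht h => ha (h ▸ ht)
    refine ⟨Function.update u a x, ?_, ?_⟩
    · intro t ht
      rcases Finset.mem_insert.mp ht with rfl | ht
      · simpa using hxS
      · simpa [hne t ht] using huS t ht
    · intro t ht t' ht' htt'
      rcases Finset.mem_insert.mp ht with rfl | hts <;>
        rcases Finset.mem_insert.mp ht' with rfl | ht's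
      · exact absurd rfl htt'
      · simpa [hne t' ht's, ← neg_mem_iff (x := _ - x)] using hx t' ht's
      · simpa [hne t hts, hW t'] using hx t hts
      · simpa [hne t hts, hne t' ht's] using hu t hts t' ht's htt'

end Avoidance

section Lines

variable {K V : Type*} [Field K] [AddCommGroup V] [Module K V] {S : Submodule K V}
  {p p' y y' : V}

lemma finrank_span_pair_eq_two (h : LinearIndependent K ![p, y]) :
    finrank K (span K {p, y}) = 2 := by
  rw [← Matrix.range_cons_cons_empty p y ![]]
  exact finrank_span_eq_card h

lemma natCard_span_pair_le [Finite K] [Finite V] (p y : V) :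
    Nat.card (span K {p, y}) ≤ Nat.card K ^ 2 := by
  rw [Module.natCard_eq_pow_finrank (K := K), ← Matrix.range_cons_cons_empty p y ![]]
  exact Nat.pow_le_pow_right Nat.card_pos (finrank_range_le_card ![p, y])

lemma linearIndependent_pair_of_mem_of_notMem (hp : p ∈ S) (hp0 : p ≠ 0) (hy : y ∉ S) :
    LinearIndependent K ![p, y] :=
  (LinearIndependent.pair_iff' hp0).mpr fun a h => hy (h ▸ S.smul_mem a hp)

lemma span_pair_inf_eq_span_singleton (hp : p ∈ S) (hy : y ∉ S) :
    span K {p, y} ⊓ S = K ∙ p := by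
  refine le_antisymm ?_ (le_inf (span_mono (by simp)) ((span_singleton_le_iff_mem p S).mpr hp))
  rintro x ⟨hxl, hxS⟩
  obtain ⟨a, c, rfl⟩ := mem_span_pair.mp hxl
  obtain rfl : c = 0 := by
    by_contra hc
    refine hy ((S.smul_mem_iff hc).mp ?_)
    simpa using S.sub_mem hxS (S.smul_mem a hp)
  simpa using smul_mem _ a (mem_span_singleton_self p)

lemma span_pair_inf_span_pair_eq_bot (hp : p ∈ S) (hp' : p' ∈ S)
    (hpp' : LinearIndependent K ![p, p']) (hy : y ∉ S) (hyy' : y' - y ∈ S)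
    (hyy'_notMem : y' - y ∉ span K {p, p'}) :
    span K {p, y} ⊓ span K {p', y'} = ⊥ := by
  rw [eq_bot_iff]
  rintro x ⟨hx, hx'⟩
  obtain ⟨a, c, rfl⟩ := mem_span_pair.mp hx
  obtain ⟨a', c', h⟩ := mem_span_pair.mp hx'
  obtain rfl : c' = c := by
    by_contra hne
    refine hy ((S.smul_mem_iff (sub_ne_zero.mpr hne)).mp ?_)
    have : (c' - c) • y = a • p - a' • p' - c' • (y' - y) := by
      linear_combination (norm := module) h
    rw [this]
    exact S.sub_mem (S.sub_mem (S.smul_mem a hp) (S.smul_mem a' hp')) (S.smul_mem c' hyy')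
  obtain rfl : c' = 0 := by
    by_contra hc
    refine hyy'_notMem (((span K {p, p'}).smul_mem_iff hc).mp ?_)
    have : c' • (y' - y) = a • p - a' • p' := by linear_combination (norm := module) h
    rw [this]
    exact sub_mem (smul_mem _ a (subset_span (by simp))) (smul_mem _ a' (subset_span (by simp)))
  obtain ⟨rfl, -⟩ := LinearIndependent.pair_iff.mp hpp' a (-a') (by
    linear_combination (norm := module) -h)
  simp

end Lines

open Projectivization in
theorem exists_skew_lines_inf_eq_points {K V ι : Type*} [Field K] [Finite K] [AddCommGroup V]
    [Module K V] [FiniteDimensional K V] [Finite ι] {S : Submodule K V} (hS : S ≠ ⊤)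
    (P : ι → ℙ K V) (hP : Function.Injective P) (hPS : ∀ t, (P t).submodule ≤ S)
    (hι : (Nat.card ι - 1) * Nat.card K ^ 2 < Nat.card S) :
    ∃ L : ι → Submodule K V, (∀ t, finrank K (L t) = 2) ∧ (∀ t, ¬ L t ≤ S) ∧
      (∀ t, L t ⊓ S = (P t).submodule) ∧ Pairwise fun t t' => L t ⊓ L t' = ⊥ := by
  have := Module.finite_of_finite K (M := V)
  obtain ⟨w, hw⟩ := SetLike.exists_not_mem_of_ne_top S hS rfl
  have hpS : ∀ t, (P t).rep ∈ S := fun t => hPS t (by simp [submodule_eq])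
  have hpp : Pairwise fun t t' => LinearIndependent K ![(P t).rep, (P t').rep] := by
    intro t t' h
    convert independent_iff.mp ((independent_pair_iff_ne (P t) (P t')).mpr (hP.ne h)) using 1
    ext i
    fin_cases i <;> rfl
  obtain ⟨u, huS, hu⟩ := exists_pairwise_sub_notMem (S : Set V)
    (fun t t' => (span K {(P t).rep, (P t').rep}).toAddSubgroup)
    (fun t t' => by rw [Set.pair_comm]) (N := Nat.card K ^ 2)
    (fun t t' => natCard_span_pair_le _ _) (by rwa [← Nat.card_coe_set_eq])
  have hwu : ∀ t, w + u t ∉ S := fun t h => hw (by simpa using S.sub_mem h (huS t))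
  refine ⟨fun t => span K {(P t).rep, w + u t}, fun t => ?_, fun t h => ?_, fun t => ?_, ?_⟩
  · exact finrank_span_pair_eq_two
      (linearIndependent_pair_of_mem_of_notMem (hpS t) (rep_nonzero _) (hwu t))
  · exact hwu t (h (subset_span (by simp)))
  · rw [span_pair_inf_eq_span_singleton (hpS t) (hwu t), submodule_eq]
  · intro t t' h
    exact span_pair_inf_span_pair_eq_bot (hpS t) (hpS t') (hpp h) (hwu t)
      (by simpa using S.sub_mem (huS t') (huS t)) (by simpa using hu t t' h)

section PointsOn

open Projectivization

variable {K V ι : Type*} [Field K] [AddCommGroup V] [Module K V] (r : ι → Submodule K V)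

def pointsOn : (Σ i, ℙ K (r i)) → ℙ K V :=
  fun x => x.2.map (r x.1).subtype (r x.1).injective_subtype

lemma submodule_pointsOn_le (x : Σ i, ℙ K (r i)) : (pointsOn r x).submodule ≤ r x.1 := by
  obtain ⟨i, x⟩ := x
  induction x using Projectivization.ind with
  | h v hv => simp [pointsOn, map_mk, submodule_mk, span_singleton_le_iff_mem]

lemma pointsOn_injective (hr : Pairwise fun i j => r i ⊓ r j = ⊥) :
    Function.Injective (pointsOn r) := by
  rintro ⟨i, x⟩ ⟨j, y⟩ h
  obtain rfl : i = j := by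
    by_contra hij
    have hbot : (pointsOn r ⟨i, x⟩).submodule ≤ r i ⊓ r j :=
      le_inf (submodule_pointsOn_le r _) (h ▸ submodule_pointsOn_le r _)
    have := (pointsOn r ⟨i, x⟩).finrank_submodule
    rw [hr hij, le_bot_iff] at hbot
    rw [hbot, finrank_bot] at this
    exact zero_ne_one this
  exact congrArg (Sigma.mk i) (map_injective (r i).subtype (r i).injective_subtype h)

lemma natCard_sigma_projectivization [Fintype ι] [Finite K] [Finite V]
    (hr : ∀ i, finrank K (r i) = 2) :
    Nat.card (Σ i, ℙ K (r i)) = Fintype.card ι * (Nat.card K + 1) := by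
  rw [Nat.card_sigma,
    Finset.sum_congr rfl fun i _ => Projectivization.card_of_finrank_two K _ (hr i),
    Finset.sum_const, Finset.card_univ, smul_eq_mul]

lemma exists_mem_submodule_pointsOn {i : ι} {v : V} (hv : v ∈ r i) (hv0 : v ≠ 0) :
    ∃ x, v ∈ (pointsOn r ⟨i, x⟩).submodule :=
  ⟨mk K ⟨v, hv⟩ (by simpa using hv0),
    by simp [pointsOn, map_mk, submodule_mk, mem_span_singleton_self]⟩

end PointsOn

section PartialSpread

variable {F : Type} [Field F] {A B : Set (Submodule F (Fin 5 → F))}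

lemma IsPartialSpread.mono (hB : IsPartialSpread F B) (h : A ⊆ B) : IsPartialSpread F A :=
  ⟨fun ℓ hℓ => hB.1 ℓ (h hℓ), fun ℓ₁ h₁ ℓ₂ h₂ => hB.2 ℓ₁ (h h₁) ℓ₂ (h h₂)⟩

lemma IsPartialSpread.union (hA : IsPartialSpread F A) (hB : IsPartialSpread F B)
    (hAB : ∀ a ∈ A, ∀ b ∈ B, a ⊓ b = ⊥) : IsPartialSpread F (A ∪ B) := by
  refine ⟨fun ℓ hℓ => hℓ.elim (hA.1 ℓ) (hB.1 ℓ), ?_⟩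
  rintro ℓ₁ (h₁ | h₁) ℓ₂ (h₂ | h₂) hne
  · exact hA.2 _ h₁ _ h₂ hne
  · exact hAB _ h₁ _ h₂
  · rw [inf_comm]
    exact hAB _ h₂ _ h₁
  · exact hB.2 _ h₁ _ h₂ hne

lemma isPartialSpread_range {ι : Type*} {L : ι → Submodule F (Fin 5 → F)}
    (hL : ∀ t, finrank F (L t) = 2) (hskew : Pairwise fun t t' => L t ⊓ L t' = ⊥) :
    IsPartialSpread F (Set.range L) := by
  refine ⟨Set.forall_mem_range.mpr hL, ?_⟩
  rintro _ ⟨t, rfl⟩ _ ⟨t', rfl⟩ hne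
  exact hskew fun h => hne (h ▸ rfl)

end PartialSpread

lemma sub_one_mul_sq_lt_pow_four {q k : ℕ} (hq : 0 < q) (hk : k ≤ q - 1) :
    (k * (q + 1) - 1) * q ^ 2 < q ^ 4 := by
  have hkq : k * (q + 1) < q ^ 2 := calc
    k * (q + 1) ≤ (q - 1) * (q + 1) := Nat.mul_le_mul_right _ hk
    _ < q ^ 2 := by
      obtain ⟨m, rfl⟩ : ∃ m, q = m + 1 := ⟨q - 1, by omega⟩
      rw [Nat.add_sub_cancel]
      ring_nf
      omega
  calc (k * (q + 1) - 1) * q ^ 2 < q ^ 2 * q ^ 2 := by gcongr; omega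
    _ = q ^ 4 := by ring

theorem stmt15_general (q : ℕ) (F : Type) [Field F] [Fintype F] (hF : Fintype.card F = q)
    (S : Submodule F (Fin 5 → F)) (hS : finrank F S = 4)
    (Fs : Set (Submodule F (Fin 5 → F)))
    (hFsline : ∀ ℓ ∈ Fs, finrank F ℓ = 2) (hFsS : ∀ ℓ ∈ Fs, ℓ ≤ S)
    (hFsskew : ∀ ℓ₁ ∈ Fs, ∀ ℓ₂ ∈ Fs, ℓ₁ ≠ ℓ₂ → ℓ₁ ⊓ ℓ₂ = ⊥)
    (k : ℕ) (hk : k ≤ q - 1)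
    (r : Fin k → Submodule F (Fin 5 → F))
    (hr : ∀ i, r i ∈ Fs) (hrinj : Function.Injective r) :
    ∃ M : Fin k → Set (Submodule F (Fin 5 → F)),
      (∀ i, (M i).ncard = q + 1) ∧
      (∀ i, ∀ ℓ ∈ M i, finrank F ℓ = 2 ∧ ¬ ℓ ≤ S) ∧
      (∀ i, ∀ v ∈ r i, v ≠ 0 → ∃ ℓ ∈ M i, v ∈ ℓ) ∧
      IsPartialSpread F ((Fs \ Set.range r) ∪ ⋃ i, M i) := by
  have hqF : Nat.card F = q := by rw [Nat.card_eq_fintype_card, hF]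
  have hrskew : Pairwise fun i j => r i ⊓ r j = ⊥ := fun i j h =>
    hFsskew _ (hr i) _ (hr j) (hrinj.ne h)
  have hnpoints : (Nat.card (Σ i, ℙ F (r i)) - 1) * Nat.card F ^ 2 < Nat.card S := by
    rw [natCard_sigma_projectivization r fun i => hFsline _ (hr i),
      Module.natCard_eq_pow_finrank (K := F) (V := S), hS, hqF, Fintype.card_fin]
    exact sub_one_mul_sq_lt_pow_four (hF ▸ Fintype.card_pos) hk
  obtain ⟨L, hL2, hLS, hLinf, hLskew⟩ := exists_skew_lines_inf_eq_points
    (fun h => by rw [h, finrank_top, finrank_fin_fun] at hS; omega)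
    (pointsOn r) (pointsOn_injective r hrskew)
    (fun x => (submodule_pointsOn_le r x).trans (hFsS _ (hr _))) hnpoints
  have hLinj := injective_of_pairwise_inf_eq_bot
    (fun t h => by have := hL2 t; rw [h, finrank_bot] at this; omega) hLskew
  refine ⟨fun i => Set.range fun x => L ⟨i, x⟩, fun i => ?_, ?_, fun i v hv hv0 => ?_, ?_⟩
  · show (Set.range (L ∘ Sigma.mk i)).ncard = q + 1
    rw [← Nat.card_coe_set_eq, Nat.card_range_of_injective (hLinj.comp sigma_mk_injective),
      Projectivization.card_of_finrank_two _ _ (hFsline _ (hr _)), hqF]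
  · rintro i _ ⟨x, rfl⟩
    exact ⟨hL2 _, hLS _⟩
  · obtain ⟨x, hx⟩ := exists_mem_submodule_pointsOn r hv hv0
    exact ⟨L ⟨i, x⟩, ⟨x, rfl⟩, (hLinf ⟨i, x⟩ ▸ inf_le_left : _ ≤ L _) hx⟩
  · rw [← Set.range_sigma_eq_iUnion_range]
    refine (IsPartialSpread.mono ⟨hFsline, hFsskew⟩ Set.sdiff_subset).union
      (isPartialSpread_range hL2 hLskew) ?_
    rintro ℓ ⟨hℓ, hℓr⟩ _ ⟨x, rfl⟩
    exact inf_eq_bot_of_le_of_inf_le (hFsS ℓ hℓ)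
      ((hLinf x).trans_le (submodule_pointsOn_le r x))
      (hFsskew _ hℓ _ (hr x.1) fun h => hℓr ⟨x.1, h.symm⟩)

/-- Let F be a spread of a hyperplane S of PG(4,q) and r₁,…,r_k (k ≤ q−1)
distinct lines of F. Then the iterative construction succeeds: there exist, for each i, a set
M i of q+1 pairwise skew lines not contained in S covering r i, such that replacing the lines
r₁,…,r_k of F by all the added lines yields a partial spread. -/
theorem stmt15 (q : ℕ) (F : Type) [Field F] [Fintype F] (hF : Fintype.card F = q)
    (S : Submodule F (Fin 5 → F)) (hS : finrank F S = 4)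
    (Fs : Set (Submodule F (Fin 5 → F)))
    (hFsline : ∀ ℓ ∈ Fs, finrank F ℓ = 2) (hFsS : ∀ ℓ ∈ Fs, ℓ ≤ S)
    (hFsskew : ∀ ℓ₁ ∈ Fs, ∀ ℓ₂ ∈ Fs, ℓ₁ ≠ ℓ₂ → ℓ₁ ⊓ ℓ₂ = ⊥)
    (hFscover : ∀ v ∈ S, v ≠ 0 → ∃ ℓ ∈ Fs, v ∈ ℓ)
    (hFscard : Fs.ncard = q ^ 2 + 1)
    (k : ℕ) (hk : k ≤ q - 1)
    (r : Fin k → Submodule F (Fin 5 → F))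
    (hr : ∀ i, r i ∈ Fs) (hrinj : Function.Injective r) :
    ∃ M : Fin k → Set (Submodule F (Fin 5 → F)),
      (∀ i, (M i).ncard = q + 1) ∧
      (∀ i, ∀ ℓ ∈ M i, finrank F ℓ = 2 ∧ ¬ ℓ ≤ S) ∧
      (∀ i, ∀ v ∈ r i, v ≠ 0 → ∃ ℓ ∈ M i, v ∈ ℓ) ∧
      IsPartialSpread F ((Fs \ Set.range r) ∪ ⋃ i, M i) :=
  stmt15_general q F hF S hS Fs hFsline hFsS hFsskew k hk r hr hrinj
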